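/- For every infinite sequence ξ of feasible subgraphs of G, every solution of the PCO network over ξ, every agent i, and every k ≥ 1 with τ_i(t_k, k) = 0 (i.e., agent i is at 0 immediately after the k-th jump), the following refractory property holds: for every hybrid time (s,k') with (t_k, k) ⪯ (s,k') and s < t_k + r_i·T, one has τ_i(s,k') < 1. -/

import Mathlib

/-!
Once agent `i` is reset to `0` at the `k`-th jump, its phase never exceeds the elapsed time
`(t - t_k) / T` as long as the latter is below `r i`: flows advance both at the same rate, and
a jump finds the agent below its threshold, so it either resets it to `0` or leaves it alone.
Hence the phase stays below `r i < 1` before time `t_k + r i * T`.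
-/

open scoped BigOperators Classical ENNReal

namespace PCO

/-- Edge sets of digraphs on the vertex set `Fin N`. -/
abbrev Edges (N : ℕ) := Finset (Fin N × Fin N)

/-- A digraph is simple if it has no self-loops. -/
def Simple (N : ℕ) (E : Edges N) : Prop := ∀ e ∈ E, e.1 ≠ e.2

/-- The set of out-edges of vertex `i` in the digraph with edge set `E`. -/
def outEdges (N : ℕ) (E : Edges N) (i : Fin N) : Edges N := E.filter (fun e => e.1 = i)

/-- `E'` is (the edge set of) a feasible subgraph of `E`: it is a subgraph on the same
vertex set containing, for each vertex `i`, all out-edges of `i` or none of them. -/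
def Feasible (N : ℕ) (E E' : Edges N) : Prop :=
  E' ⊆ E ∧ ∀ i : Fin N, outEdges N E i ⊆ E' ∨ Disjoint (outEdges N E i) E'

/-- The binary phase update rule `R_j`, with threshold `rj`, applied to the state `s`. -/
def Rset (rj s : ℝ) : Set ℝ :=
  if s < rj then {0} else if s = rj then ({0, 1} : Set ℝ) else {1}

/-- A solution of the PCO network over the sequence `ξ` of (feasible) subgraphs of `E`
(`ξ k` is the graph used at the `k`-th jump, `k ≥ 1`): an unbounded nondecreasing sequence
of jump times `tJ` with `tJ 0 = 0`, together with the states `st k = τ(tJ k, k)` just after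
each jump; the state at a hybrid time `(t,k)` is recovered by the flow, see `Sol.val`. -/
structure Sol (N : ℕ) (T : ℝ) (r : Fin N → ℝ) (E : Edges N) (ξ : ℕ → Edges N) where
  tJ : ℕ → ℝ
  st : ℕ → Fin N → ℝ
  tJ0 : tJ 0 = 0
  mono : Monotone tJ
  unbdd : ∀ M : ℝ, ∃ k, M < tJ k
  box : ∀ k i, st k i ∈ Set.Icc (0:ℝ) 1
  box' : ∀ k i, st k i + (tJ (k+1) - tJ k) / T ∈ Set.Icc (0:ℝ) 1
  jump : ∀ k, ∃ i : Fin N,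
      st k i + (tJ (k+1) - tJ k) / T = 1 ∧
      st (k+1) i = 0 ∧
      ∀ j, j ≠ i →
        ((i, j) ∈ ξ (k+1) → st (k+1) j ∈ Rset (r j) (st k j + (tJ (k+1) - tJ k) / T)) ∧
        ((i, j) ∉ ξ (k+1) → st (k+1) j = st k j)

variable {N : ℕ} {T : ℝ} {r : Fin N → ℝ} {E : Edges N} {ξ : ℕ → Edges N}

/-- The state `τ_i(t,k)` of agent `i` at the hybrid time `(t,k)`. -/
noncomputable def Sol.val (sol : Sol N T r E ξ) (t : ℝ) (k : ℕ) (i : Fin N) : ℝ :=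
  sol.st k i + (t - sol.tJ k) / T

/-- `(t,k)` is a hybrid time of the solution. -/
def Sol.HT (sol : Sol N T r E ξ) (t : ℝ) (k : ℕ) : Prop :=
  sol.tJ k ≤ t ∧ t ≤ sol.tJ (k+1)

/-- The synchronization set `A_s = {μ·1_N : μ ∈ [0,1]} ∪ {0,1}^N`. -/
def SyncSet (N : ℕ) : Set (Fin N → ℝ) :=
  {x | ∃ μ ∈ Set.Icc (0:ℝ) 1, x = fun _ => μ} ∪ {x | ∀ i, x i = 0 ∨ x i = 1}

/-- There is a directed path (walk) of length `n` from `i` to `j` in `E`. -/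
def reachIn (N : ℕ) (E : Edges N) : ℕ → Fin N → Fin N → Prop
  | 0, i, j => i = j
  | n+1, i, j => ∃ m : Fin N, (i, m) ∈ E ∧ reachIn N E n m j

/-- `i` is a root: every vertex is reachable from `i`. -/
def IsRoot (N : ℕ) (E : Edges N) (i : Fin N) : Prop := ∀ j : Fin N, ∃ n, reachIn N E n i j

/-- The depth of `j` with respect to `i`: the length of a shortest directed path from `i` to `j`. -/
noncomputable def depth (N : ℕ) (E : Edges N) (i j : Fin N) : ℕ :=
  sInf {n | reachIn N E n i j}

/-- `q*`, the maximum depth of a vertex with respect to the root `istar`. -/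
noncomputable def maxDepth (N : ℕ) (E : Edges N) (istar : Fin N) : ℕ :=
  Finset.univ.sup (fun j => depth N E istar j)

/-- `dep(G)`: the maximum of `q*` over all roots. -/
noncomputable def depG (N : ℕ) (E : Edges N) : ℕ :=
  Finset.univ.sup (fun i => if IsRoot N E i then maxDepth N E i else 0)

/-- `G_q(i*)`: the feasible subgraph of `E` whose edges are the out-edges of the vertices
at depth `q` with respect to `istar`. -/
noncomputable def Gq (N : ℕ) (E : Edges N) (istar : Fin N) (q : ℕ) : Edges N :=
  E.filter (fun e => depth N E istar e.1 = q)

/-- `r̲ = min_i r_i`. -/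
noncomputable def rmin (N : ℕ) (r : Fin N → ℝ) : ℝ := ⨅ i, r i

/-- `ℓ* = N(⌊1/r̲⌋ + 1)`. -/
noncomputable def ellStar (N : ℕ) (r : Fin N → ℝ) : ℕ :=
  N * (Nat.floor (1 / rmin N r) + 1)

/-- `L* = ℓ* q*`: the length of the synchronization string. -/
noncomputable def Lstar (N : ℕ) (r : Fin N → ℝ) (E : Edges N) (istar : Fin N) : ℕ :=
  ellStar N r * maxDepth N E istar

/-- The sequence `ξ` contains the synchronization string `ζ(i*)` as the consecutive block
`φ_{k₀} ⋯ φ_{k₀+L*−1}`: i.e. `φ_{k₀+qℓ*+m} = G_q(i*)` for `0 ≤ q ≤ q*−1`, `0 ≤ m ≤ ℓ*−1`. -/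
noncomputable def HasZetaAt (N : ℕ) (r : Fin N → ℝ) (E : Edges N) (istar : Fin N)
    (ξ : ℕ → Edges N) (k₀ : ℕ) : Prop :=
  ∀ q < maxDepth N E istar, ∀ m < ellStar N r,
    ξ (k₀ + q * ellStar N r + m) = Gq N E istar q

/-- Partial synchronization set `A_q(i*)`: all agents of depth `≤ q` with respect to `i*`
have a common state in `[0,1]`, or all have states in `{0,1}`; the remaining agents have
states in `[0,1]`. -/
noncomputable def Aq (N : ℕ) (E : Edges N) (istar : Fin N) (q : ℕ) : Set (Fin N → ℝ) :=
  {x | (∀ i, x i ∈ Set.Icc (0:ℝ) 1) ∧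
    ((∃ μ ∈ Set.Icc (0:ℝ) 1, ∀ i, depth N E istar i ≤ q → x i = μ) ∨
      (∀ i, depth N E istar i ≤ q → x i = 0 ∨ x i = 1))}

/-- The Lyapunov-like function `V`: one minus the largest circular gap between the
(sorted) entries of `τ`, when the endpoints of `[0,1]` are identified. -/
noncomputable def Vfun (N : ℕ) (hN : 0 < N) (τ : Fin N → ℝ) : ℝ :=
  1 - Finset.univ.sup' (Finset.univ_nonempty_iff.mpr ⟨⟨0, hN⟩⟩)
      (fun i : Fin N =>
        if h : (i : ℕ) + 1 < N then
          (τ ∘ Tuple.sort τ) ⟨(i : ℕ) + 1, h⟩ - (τ ∘ Tuple.sort τ) i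
        else 1 - (τ ∘ Tuple.sort τ) i + (τ ∘ Tuple.sort τ) ⟨0, hN⟩)

/-- `i` has at least one out-neighbor in `E`. -/
def HasOut (N : ℕ) (E : Edges N) (i : Fin N) : Prop := ∃ j : Fin N, (i, j) ∈ E

/-- The set `V*` of vertices of `E` having at least one out-neighbor. -/
abbrev Vstar (N : ℕ) (E : Edges N) := {i : Fin N // HasOut N E i}

/-- The feasible subgraph corresponding to `v : V* → {0,1}`: its edge set is the union of
the out-edge sets of those `i ∈ V*` with `v i = 1`. -/
noncomputable def graphOf (N : ℕ) (E : Edges N) (v : Vstar N E → Bool) : Edges N :=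
  E.filter (fun e => (if h : HasOut N E e.1 then v ⟨e.1, h⟩ else false) = true)

/-- The sample space `Ω = ({0,1}^{V*})^{ℕ}`; `ω k` represents `ω_{k+1}`. -/
abbrev Omega (N : ℕ) (E : Edges N) := ℕ → (Vstar N E → Bool)

open MeasureTheory in
/-- The Bernoulli(`p`) measure on `{0,1}`. -/
noncomputable def bern (p : ℝ) (hp : p ≤ 1) : Measure Bool :=
  (PMF.bernoulli (Real.toNNReal p) (Real.toNNReal_le_one.mpr hp)).toMeasure

open MeasureTheory in
/-- The measure `μ_p` on `{0,1}^{V*}` making coordinates i.i.d. Bernoulli(`p`). -/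
noncomputable def muP (N : ℕ) (E : Edges N) (p : ℝ) (hp : p ≤ 1) :
    Measure (Vstar N E → Bool) :=
  Measure.pi (fun _ => bern p hp)

open MeasureTheory in
/-- `P` is the countable product of copies of `μ_p` on `Ω`: the probability of every
cylinder event is the corresponding product. -/
def IsProductMeasure (N : ℕ) (E : Edges N) (p : ℝ) (hp : p ≤ 1)
    (P : Measure (Omega N E)) : Prop :=
  ∀ (S : Finset ℕ) (f : ℕ → Set (Vstar N E → Bool)),
    P {ω | ∀ k ∈ S, ω k ∈ f k} = ∏ k ∈ S, muP N E p hp (f k)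

/-- The sample path `ω` contains the synchronization string `ζ(i*)` at positions
`ω_{ℓ+1} ⋯ ω_{ℓ+L*}`. -/
noncomputable def HasZetaAtOmega (N : ℕ) (r : Fin N → ℝ) (E : Edges N) (istar : Fin N)
    (ω : Omega N E) (ℓ : ℕ) : Prop :=
  ∀ q < maxDepth N E istar, ∀ m < ellStar N r,
    graphOf N E (ω (ℓ + q * ellStar N r + m)) = Gq N E istar q

/-- The sequence of feasible subgraphs `ξ = ω` determined by the sample path `ω`
(`seqOf ω k = φ_k` for `k ≥ 1`). -/
noncomputable def seqOf (N : ℕ) (E : Edges N) (ω : Omega N E) : ℕ → Edges N :=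
  fun k => graphOf N E (ω (k - 1))

/-- The sync-time `T*` of a solution: the infimum of the (continuous) times `t ≥ 0` at
which the state lies in the synchronization set (`∞` if there is no such time). -/
noncomputable def Sol.syncTime (sol : Sol N T r E ξ) : ℝ≥0∞ :=
  sInf {x : ℝ≥0∞ | ∃ t : ℝ, ∃ k : ℕ, 0 ≤ t ∧ sol.HT t k ∧
    (fun i => sol.val t k i) ∈ SyncSet N ∧ x = ENNReal.ofReal t}

/-- Euclidean distance from a point of `ℝ^N` to a set. -/
noncomputable def eucDist (N : ℕ) (x : Fin N → ℝ) (S : Set (Fin N → ℝ)) : ℝ :=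
  Metric.infDist ((WithLp.equiv 2 (Fin N → ℝ)).symm x)
    ((WithLp.equiv 2 (Fin N → ℝ)).symm '' S)

namespace Sol

variable (sol : Sol N T r E ξ)

theorem val_self (k : ℕ) (i : Fin N) : sol.val (sol.tJ k) k i = sol.st k i := by
  simp [val]

theorem st_succ_eq_zero_or_eq {k : ℕ} {i : Fin N} (h : sol.val (sol.tJ (k + 1)) k i < r i) :
    sol.st (k + 1) i = 0 ∨ sol.st (k + 1) i = sol.st k i := by
  rw [val] at h
  obtain ⟨j, -, hj0, hjump⟩ := sol.jump k
  by_cases hij : i = j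
  · exact Or.inl (hij ▸ hj0)
  obtain ⟨hcoupled, huncoupled⟩ := hjump i hij
  by_cases hedge : (j, i) ∈ ξ (k + 1)
  · left
    simpa only [Rset, if_pos h, Set.mem_singleton_iff] using hcoupled hedge
  · exact Or.inr (huncoupled hedge)

variable {sol} (hT : 0 < T)
include hT

theorem val_le_val_of_le {k : ℕ} {s t : ℝ} (hst : s ≤ t) (i : Fin N) :
    sol.val s k i ≤ sol.val t k i := by
  unfold val
  gcongr

theorem st_le_of_st_eq_zero {k : ℕ} {i : Fin N} (h0 : sol.st k i = 0) {k' : ℕ} (hkk' : k ≤ k')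
    (hlt : (sol.tJ k' - sol.tJ k) / T < r i) :
    sol.st k' i ≤ (sol.tJ k' - sol.tJ k) / T := by
  induction k', hkk' using Nat.le_induction with
  | base => simp [h0]
  | succ k' hkk' ih =>
    have hmono : sol.tJ k' ≤ sol.tJ (k' + 1) := sol.mono k'.le_succ
    have hflow : sol.val (sol.tJ (k' + 1)) k' i ≤ (sol.tJ (k' + 1) - sol.tJ k) / T := by
      have hst := ih (lt_of_le_of_lt (by gcongr) hlt)
      rw [val, ← sub_add_sub_cancel (sol.tJ (k' + 1)) (sol.tJ k') (sol.tJ k), add_div]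
      linarith
    have helapsed : 0 ≤ (sol.tJ (k' + 1) - sol.tJ k) / T :=
      div_nonneg (sub_nonneg.mpr (sol.mono (hkk'.trans k'.le_succ))) hT.le
    rcases sol.st_succ_eq_zero_or_eq (hflow.trans_lt hlt) with hreset | hkept
    · rw [hreset]
      exact helapsed
    · rw [hkept, ← val_self]
      exact (val_le_val_of_le hT hmono i).trans hflow

theorem val_le_of_st_eq_zero {k : ℕ} {i : Fin N} (h0 : sol.st k i = 0) {s : ℝ} {k' : ℕ}
    (hs : sol.HT s k') (hkk' : k ≤ k') (hlt : (s - sol.tJ k) / T < r i) :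
    sol.val s k' i ≤ (s - sol.tJ k) / T := by
  have hprev : (sol.tJ k' - sol.tJ k) / T < r i := lt_of_le_of_lt (by gcongr; exact hs.1) hlt
  have hst := st_le_of_st_eq_zero hT h0 hkk' hprev
  rw [val, ← sub_add_sub_cancel s (sol.tJ k') (sol.tJ k), add_div]
  linarith

end Sol

theorem stmt8_general
    (N : ℕ) (T : ℝ) (hT : 0 < T) (r : Fin N → ℝ)
    (hr : ∀ i, r i ∈ Set.Ioo (0:ℝ) 1) (E : Edges N)
    (ξ : ℕ → Edges N)
    (sol : Sol N T r E ξ) (i : Fin N) (k : ℕ)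
    (h0 : sol.st k i = 0) :
    ∀ (s : ℝ) (k' : ℕ), sol.HT s k' → k ≤ k' → sol.tJ k ≤ s →
      s < sol.tJ k + r i * T → sol.val s k' i < 1 := by
  intro s k' hs hkk' _ hlt
  have helapsed : (s - sol.tJ k) / T < r i := by
    rw [div_lt_iff₀ hT]
    linarith
  calc sol.val s k' i ≤ (s - sol.tJ k) / T := Sol.val_le_of_st_eq_zero hT h0 hs hkk' helapsed
    _ < r i := helapsed
    _ < 1 := (hr i).2

theorem stmt8
    (N : ℕ) (hN : 0 < N) (T : ℝ) (hT : 0 < T) (r : Fin N → ℝ)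
    (hr : ∀ i, r i ∈ Set.Ioo (0:ℝ) 1) (E : Edges N) (hE : Simple N E)
    (ξ : ℕ → Edges N) (hξ : ∀ k, 1 ≤ k → Feasible N E (ξ k))
    (sol : Sol N T r E ξ) (i : Fin N) (k : ℕ) (hk : 1 ≤ k)
    (h0 : sol.st k i = 0) :
    ∀ (s : ℝ) (k' : ℕ), sol.HT s k' → k ≤ k' → sol.tJ k ≤ s →
      s < sol.tJ k + r i * T → sol.val s k' i < 1 :=
  stmt8_general N T hT r hr E ξ sol i k h0

end PCO
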